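/- For every n ≥ 1, every nilpotent endomorphism (f₁,f₂,f₃,f₄) of the representation N_n of Q satisfies: f₁=f₂=f₃=f₄ and the image of f₁ is contained in the image of J_n(0); consequently the endomorphism induces the zero map on the cokernel of m_a = J_n(0): kⁿ → kⁿ. -/

import Mathlib

variable (k : Type) [Field k]

/-- A finite-dimensional representation of the quiver `Q` with vertices `1,2,3,4`
and arrows `a : 1 → 2`, `b : 1 → 3`, `c : 2 → 4`, `d : 3 → 4`. -/
structure QRep where
  V1 : Type
  V2 : Type
  V3 : Type
  V4 : Type
  [acg1 : AddCommGroup V1]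
  [acg2 : AddCommGroup V2]
  [acg3 : AddCommGroup V3]
  [acg4 : AddCommGroup V4]
  [mod1 : Module k V1]
  [mod2 : Module k V2]
  [mod3 : Module k V3]
  [mod4 : Module k V4]
  [fin1 : FiniteDimensional k V1]
  [fin2 : FiniteDimensional k V2]
  [fin3 : FiniteDimensional k V3]
  [fin4 : FiniteDimensional k V4]
  ma : V1 →ₗ[k] V2
  mb : V1 →ₗ[k] V3
  mc : V2 →ₗ[k] V4
  md : V3 →ₗ[k] V4

attribute [instance] QRep.acg1 QRep.acg2 QRep.acg3 QRep.acg4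
  QRep.mod1 QRep.mod2 QRep.mod3 QRep.mod4
  QRep.fin1 QRep.fin2 QRep.fin3 QRep.fin4

variable {k}

/-- Morphisms of representations of `Q`. -/
@[ext]
structure QHom (M N : QRep k) where
  f1 : M.V1 →ₗ[k] N.V1
  f2 : M.V2 →ₗ[k] N.V2
  f3 : M.V3 →ₗ[k] N.V3
  f4 : M.V4 →ₗ[k] N.V4
  comm_a : f2 ∘ₗ M.ma = N.ma ∘ₗ f1
  comm_b : f3 ∘ₗ M.mb = N.mb ∘ₗ f1
  comm_c : f4 ∘ₗ M.mc = N.mc ∘ₗ f2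
  comm_d : f4 ∘ₗ M.md = N.md ∘ₗ f3

/-- Two representations are isomorphic iff there is a morphism all of whose
components are bijective. -/
def QIso (M N : QRep k) : Prop :=
  ∃ f : QHom M N, Function.Bijective f.f1 ∧ Function.Bijective f.f2 ∧
    Function.Bijective f.f3 ∧ Function.Bijective f.f4

/-- The zero representation(s). -/
def QRep.IsZeroRep (M : QRep k) : Prop :=
  Subsingleton M.V1 ∧ Subsingleton M.V2 ∧ Subsingleton M.V3 ∧ Subsingleton M.V4

/-- Vertexwise direct sum of representations. -/
def QRep.dsum (M N : QRep k) : QRep k where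
  V1 := M.V1 × N.V1
  V2 := M.V2 × N.V2
  V3 := M.V3 × N.V3
  V4 := M.V4 × N.V4
  ma := M.ma.prodMap N.ma
  mb := M.mb.prodMap N.mb
  mc := M.mc.prodMap N.mc
  md := M.md.prodMap N.md

/-- Direct sum of `n` copies of a representation. -/
def QRep.dpow (M : QRep k) (n : ℕ) : QRep k where
  V1 := Fin n → M.V1
  V2 := Fin n → M.V2
  V3 := Fin n → M.V3
  V4 := Fin n → M.V4
  ma := M.ma.compLeft (Fin n)
  mb := M.mb.compLeft (Fin n)
  mc := M.mc.compLeft (Fin n)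
  md := M.md.compLeft (Fin n)

/-- A representation is indecomposable if it is nonzero and not isomorphic to a
direct sum of two nonzero representations. -/
def QRep.Indecomposable (M : QRep k) : Prop :=
  ¬ M.IsZeroRep ∧ ∀ A B : QRep k, QIso M (A.dsum B) → A.IsZeroRep ∨ B.IsZeroRep

/-- `0 → A → B → C → 0` is short exact (vertexwise). -/
def QShortExact {A B C : QRep k} (f : QHom A B) (g : QHom B C) : Prop :=
  (Function.Injective f.f1 ∧ Function.Injective f.f2 ∧
    Function.Injective f.f3 ∧ Function.Injective f.f4) ∧
  (Function.Surjective g.f1 ∧ Function.Surjective g.f2 ∧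
    Function.Surjective g.f3 ∧ Function.Surjective g.f4) ∧
  (LinearMap.range f.f1 = LinearMap.ker g.f1 ∧ LinearMap.range f.f2 = LinearMap.ker g.f2 ∧
    LinearMap.range f.f3 = LinearMap.ker g.f3 ∧ LinearMap.range f.f4 = LinearMap.ker g.f4)

variable (k)

/-- The `n×n` Jordan block with eigenvalue `lam`, as a linear endomorphism of `kⁿ`. -/
def jordan (n : ℕ) (lam : k) : (Fin n → k) →ₗ[k] (Fin n → k) :=
  Matrix.mulVecLin (Matrix.of fun i j : Fin n =>
    if i = j then lam else if (i : ℕ) + 1 = (j : ℕ) then 1 else 0)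

/-- The representation `M_n(λ) = (kⁿ,kⁿ,kⁿ,kⁿ; id,id,id,J_n(λ))`. -/
def Mlam (n : ℕ) (lam : k) : QRep k where
  V1 := Fin n → k
  V2 := Fin n → k
  V3 := Fin n → k
  V4 := Fin n → k
  ma := LinearMap.id
  mb := LinearMap.id
  mc := LinearMap.id
  md := jordan k n lam

/-- The indecomposable projective `P₁ = (k,k,k,k²)`. -/
def P1 : QRep k where
  V1 := k
  V2 := k
  V3 := k
  V4 := k × k
  ma := LinearMap.id
  mb := LinearMap.id
  mc := LinearMap.inl k k k
  md := LinearMap.inr k k k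

/-- The indecomposable projective `P₂ = (0,k,0,k)`. -/
def P2 : QRep k where
  V1 := Fin 0 → k
  V2 := k
  V3 := Fin 0 → k
  V4 := k
  ma := 0
  mb := 0
  mc := LinearMap.id
  md := 0

/-- The indecomposable projective `P₃ = (0,0,k,k)`. -/
def P3 : QRep k where
  V1 := Fin 0 → k
  V2 := Fin 0 → k
  V3 := k
  V4 := k
  ma := 0
  mb := 0
  mc := 0
  md := LinearMap.id

/-- The indecomposable projective `P₄ = (0,0,0,k)`. -/
def P4 : QRep k where
  V1 := Fin 0 → k
  V2 := Fin 0 → k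
  V3 := Fin 0 → k
  V4 := k
  ma := 0
  mb := 0
  mc := 0
  md := 0

/-- The special-tube representation `N_n = (kⁿ,kⁿ,kⁿ,kⁿ; J_n(0),id,id,id)`. -/
def Nrep (n : ℕ) : QRep k where
  V1 := Fin n → k
  V2 := Fin n → k
  V3 := Fin n → k
  V4 := Fin n → k
  ma := jordan k n 0
  mb := LinearMap.id
  mc := LinearMap.id
  md := LinearMap.id

variable {k}

lemma QHom.comm_a_apply {M N : QRep k} (f : QHom M N) (x : M.V1) :
    f.f2 (M.ma x) = N.ma (f.f1 x) := LinearMap.congr_fun f.comm_a x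

lemma QHom.comm_b_apply {M N : QRep k} (f : QHom M N) (x : M.V1) :
    f.f3 (M.mb x) = N.mb (f.f1 x) := LinearMap.congr_fun f.comm_b x

lemma QHom.comm_c_apply {M N : QRep k} (f : QHom M N) (x : M.V2) :
    f.f4 (M.mc x) = N.mc (f.f2 x) := LinearMap.congr_fun f.comm_c x

lemma QHom.comm_d_apply {M N : QRep k} (f : QHom M N) (x : M.V3) :
    f.f4 (M.md x) = N.md (f.f3 x) := LinearMap.congr_fun f.comm_d x

/-- The identity morphism of a representation. -/
def QHom.idHom (M : QRep k) : QHom M M :=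
  ⟨LinearMap.id, LinearMap.id, LinearMap.id, LinearMap.id, by simp, by simp, by simp, by simp⟩

/-- Composition of morphisms of representations. -/
def QHom.comp {L M N : QRep k} (g : QHom M N) (f : QHom L M) : QHom L N where
  f1 := g.f1 ∘ₗ f.f1
  f2 := g.f2 ∘ₗ f.f2
  f3 := g.f3 ∘ₗ f.f3
  f4 := g.f4 ∘ₗ f.f4
  comm_a := by ext x; simp [QHom.comm_a_apply]
  comm_b := by ext x; simp [QHom.comm_b_apply]
  comm_c := by ext x; simp [QHom.comm_c_apply]
  comm_d := by ext x; simp [QHom.comm_d_apply]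

/-- The zero morphism. -/
def QHom.zeroHom (M N : QRep k) : QHom M N :=
  ⟨0, 0, 0, 0, by simp, by simp, by simp, by simp⟩

/-- Iterated composition power of an endomorphism. -/
def QHom.pow {M : QRep k} (f : QHom M M) : ℕ → QHom M M
  | 0 => QHom.idHom M
  | m + 1 => f.comp (f.pow m)

/-- An endomorphism is nilpotent if some composition power of it vanishes. -/
def QHom.IsNilpotent {M : QRep k} (f : QHom M M) : Prop :=
  ∃ m : ℕ, f.pow m = QHom.zeroHom M M

/-!
Since `m_b`, `m_c`, `m_d` are identities, the commutativity squares force `f₁ = f₂ = f₃ = f₄ =: g`,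
and the square for `m_a` says that `g` commutes with `J = J_n(0)`. Hence `g` preserves `im J` and
induces a nilpotent endomorphism of `coker J`. The image of `J` is the hyperplane of vectors with
vanishing last coordinate, so `coker J` has dimension at most one, and a nilpotent endomorphism of
such a space is zero.
-/

section LinearAlgebra

variable {K V : Type*} [Field K] [AddCommGroup V] [Module K V] [FiniteDimensional K V]

theorem Module.End.eq_zero_of_isNilpotent_of_finrank_le_one {φ : Module.End K V}
    (hφ : IsNilpotent φ) (hV : Module.finrank K V ≤ 1) : φ = 0 := by
  have hpow : φ ^ Module.finrank K V = 0 := by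
    simpa [hφ.charpoly_eq_X_pow_finrank] using φ.aeval_self_charpoly
  interval_cases h : Module.finrank K V
  · have := Module.finrank_zero_iff.mp h
    exact Subsingleton.elim _ _
  · simpa using hpow

theorem range_le_range_of_isNilpotent_of_commute {g J : Module.End K V} (hg : IsNilpotent g)
    (hgJ : Commute g J) (hJ : Module.finrank K (V ⧸ LinearMap.range J) ≤ 1) :
    LinearMap.range g ≤ LinearMap.range J := by
  have hinv : LinearMap.range J ≤ (LinearMap.range J).comap g := by
    rintro _ ⟨w, rfl⟩
    exact ⟨g w, (LinearMap.congr_fun hgJ w).symm⟩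
  have hq : (LinearMap.range J).mapQ _ g hinv = 0 := by
    refine Module.End.eq_zero_of_isNilpotent_of_finrank_le_one ?_ hJ
    obtain ⟨m, hm⟩ := hg
    exact ⟨m, by rw [← Submodule.mapQ_pow]; ext x; simp [hm]⟩
  rintro _ ⟨v, rfl⟩
  simpa using LinearMap.congr_fun hq (Submodule.Quotient.mk v)

end LinearAlgebra

theorem jordan_zero_apply_succ (n : ℕ) (w : Fin (n + 1) → k) :
    jordan k (n + 1) 0 w = Fin.snoc (Fin.tail w) 0 := by
  ext i
  induction i using Fin.lastCases with
  | last =>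
    simp only [jordan, Matrix.mulVecLin_apply, Matrix.mulVec, dotProduct, Matrix.of_apply,
      Fin.snoc_last]
    refine Finset.sum_eq_zero fun j _ => ?_
    have : n + 1 ≠ (j : ℕ) := by omega
    simp [this]
  | cast i =>
    simp only [jordan, Matrix.mulVecLin_apply, Matrix.mulVec, dotProduct, Matrix.of_apply,
      Fin.snoc_castSucc, Fin.tail]
    rw [Finset.sum_eq_single i.succ]
    · simp [Fin.ext_iff]
    · intro j _ hj
      split_ifs <;> simp_all [Fin.ext_iff]
    · simp

theorem range_jordan_zero_succ (n : ℕ) :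
    LinearMap.range (jordan k (n + 1) 0) = LinearMap.ker (LinearMap.proj (Fin.last n)) := by
  ext v
  simp only [LinearMap.mem_range, LinearMap.mem_ker, LinearMap.proj_apply]
  constructor
  · rintro ⟨w, rfl⟩
    simp [jordan_zero_apply_succ]
  · intro hv
    refine ⟨Fin.cons 0 (Fin.init v), ?_⟩
    rw [jordan_zero_apply_succ, Fin.tail_cons, ← hv, Fin.snoc_init_self]

theorem finrank_quotient_range_jordan_zero_le_one (n : ℕ) :
    Module.finrank k ((Fin n → k) ⧸ LinearMap.range (jordan k n 0)) ≤ 1 := by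
  cases n with
  | zero => exact (Submodule.finrank_quotient_le _).trans (by rw [Module.finrank_fin_fun]; omega)
  | succ n =>
    rw [range_jordan_zero_succ, LinearEquiv.finrank_eq (LinearMap.quotKerEquivRange _)]
    exact (Submodule.finrank_le _).trans (Module.finrank_self k).le

theorem QHom.pow_f2 {M : QRep k} (f : QHom M M) (m : ℕ) : (f.pow m).f2 = f.f2 ^ m := by
  induction m with
  | zero => rfl
  | succ m ih => rw [pow_succ', ← ih]; rfl

theorem QHom.IsNilpotent.isNilpotent_f2 {M : QRep k} {f : QHom M M} (hf : f.IsNilpotent) :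
    _root_.IsNilpotent f.f2 := by
  obtain ⟨m, hm⟩ := hf
  exact ⟨m, by rw [← f.pow_f2, hm]; rfl⟩

theorem QHom.nrep_components_eq {n : ℕ} (f : QHom (Nrep k n) (Nrep k n)) :
    f.f1 = f.f2 ∧ f.f2 = f.f3 ∧ f.f3 = f.f4 := by
  have h31 : f.f3 = f.f1 := f.comm_b
  have h42 : f.f4 = f.f2 := f.comm_c
  have h43 : f.f4 = f.f3 := f.comm_d
  exact ⟨by rw [← h31, ← h43, h42], by rw [← h42, h43], h43.symm⟩

theorem QHom.nrep_commute_jordan {n : ℕ} (f : QHom (Nrep k n) (Nrep k n)) :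
    Commute f.f2 (jordan k n 0) := by
  have h := f.comm_a
  rwa [f.nrep_components_eq.1] at h

theorem stmt3_general (k : Type) [Field k] (n : ℕ)
    (f : QHom (Nrep k n) (Nrep k n)) (hf : f.IsNilpotent) :
    (f.f1 = f.f2 ∧ f.f2 = f.f3 ∧ f.f3 = f.f4) ∧
    LinearMap.range f.f1 ≤ LinearMap.range (jordan k n 0) ∧
    (LinearMap.range (jordan k n 0)).mkQ ∘ₗ f.f2 = 0 := by
  have hcomp := f.nrep_components_eq
  have hrange : LinearMap.range f.f2 ≤ LinearMap.range (jordan k n 0) :=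
    range_le_range_of_isNilpotent_of_commute hf.isNilpotent_f2 f.nrep_commute_jordan
      (finrank_quotient_range_jordan_zero_le_one n)
  refine ⟨hcomp, hcomp.1 ▸ hrange, ?_⟩
  exact LinearMap.range_le_ker_iff.mp (by rwa [Submodule.ker_mkQ])

/-- every nilpotent endomorphism `(f₁,f₂,f₃,f₄)` of `N_n` satisfies
`f₁ = f₂ = f₃ = f₄`, the image of `f₁` is contained in the image of `J_n(0)`, and
the endomorphism induces the zero map on the cokernel of `m_a = J_n(0)`. -/
theorem stmt3 (k : Type) [Field k] (n : ℕ) (hn : 1 ≤ n)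
    (f : QHom (Nrep k n) (Nrep k n)) (hf : f.IsNilpotent) :
    (f.f1 = f.f2 ∧ f.f2 = f.f3 ∧ f.f3 = f.f4) ∧
    LinearMap.range f.f1 ≤ LinearMap.range (jordan k n 0) ∧
    (LinearMap.range (jordan k n 0)).mkQ ∘ₗ f.f2 = 0 :=
  stmt3_general k n f hf
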